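/- Let μ > 0 and a > 2√((μ+1)/μ). Then there exists a unique x̄ ∈ (2/a, 1] such that ((a²−1)x̄² − 2a x̄ + 1)/(a x̄ − 1)^{2μ+2} + x̄² − 1 = 0. -/

import Mathlib

open Set Real

/-! On `[2/a, 1)` we have `w = (1 - x²)(exp ψ - 1)` with
`ψ = log ((ax-1)² - x²) - log (1 - x²) - (2μ+2) log (ax-1)`, so the zeros of `w` in `(2/a, 1)`
are those of `ψ`, while `w 1 = a(a-2)/(a-1)^(2μ+2) > 0`. Moreover `ψ (2/a) = 0` and
`ψ' = F/(ax-1)` with `F` strictly increasing, so by Rolle `ψ` has at most one zero in `(2/a, 1)`.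
The hypothesis on `a` says exactly that `F (2/a) = 2a(4 - μ(a²-4))/(a²-4) < 0`; hence `ψ`, and with
it `w`, is negative at some `x₀` just to the right of `2/a`, and the intermediate value theorem
for `w` on `[x₀, 1]` produces the root. Here `ψ` is `wLog` and `F` is `wLogDerivNum`. -/

theorem exists_mem_Ioo_lt_of_hasDerivAt_neg {f : ℝ → ℝ} {f' x b : ℝ} (hf : HasDerivAt f f' x)
    (hf' : f' < 0) (hxb : x < b) : ∃ y ∈ Ioo x b, f y < f x := by
  obtain ⟨y, hslope, hy⟩ :=
    ((hf.hasDerivWithinAt.liminf_right_slope_le hf').and_eventually (Ioo_mem_nhdsGT hxb)).exists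
  refine ⟨y, hy, ?_⟩
  rw [slope_def_field, div_lt_iff₀ (sub_pos.2 hy.1)] at hslope
  linarith

theorem subsingleton_zeros_of_hasDerivAt {f f' : ℝ → ℝ} {a b : ℝ} (hfa : f a = 0)
    (hcont : ContinuousOn f (Ico a b)) (hderiv : ∀ x ∈ Ioo a b, HasDerivAt f (f' x) x)
    (hf' : {x ∈ Ioo a b | f' x = 0}.Subsingleton) : {x ∈ Ioo a b | f x = 0}.Subsingleton := by
  intro y ⟨hy, hfy⟩ z ⟨hz, hfz⟩
  wlog hyz : y < z generalizing y z
  · rcases (not_lt.1 hyz).eq_or_lt with h | h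
    · exact h.symm
    · exact (this hz hfz hy hfy h).symm
  obtain ⟨ξ, hξ, hξ0⟩ := exists_hasDerivAt_eq_zero hy.1
    (hcont.mono fun x hx => ⟨hx.1, hx.2.trans_lt hy.2⟩) (hfa.trans hfy.symm)
    fun x hx => hderiv x ⟨hx.1, hx.2.trans hy.2⟩
  obtain ⟨η, hη, hη0⟩ := exists_hasDerivAt_eq_zero hyz
    (hcont.mono fun x hx => ⟨hy.1.le.trans hx.1, hx.2.trans_lt hz.2⟩) (hfy.trans hfz.symm)
    fun x hx => hderiv x ⟨hy.1.trans hx.1, hx.2.trans hz.2⟩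
  exact absurd (hf' ⟨⟨hξ.1, hξ.2.trans hy.2⟩, hξ0⟩ ⟨⟨hy.1.trans hη.1, hη.2.trans hz.2⟩, hη0⟩)
    (hξ.2.trans hη.1).ne

noncomputable def wFun (μ a x : ℝ) : ℝ :=
  ((a^2 - 1) * x^2 - 2*a*x + 1) / (a*x - 1) ^ (2*μ+2) + x^2 - 1

noncomputable def wLog (μ a x : ℝ) : ℝ :=
  log ((a*x - 1)^2 - x^2) - log (1 - x^2) - (2*μ + 2) * log (a*x - 1)

noncomputable def wLogDerivNum (μ a x : ℝ) : ℝ :=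
  2*x / ((a*x - 1)^2 - x^2) + 2*x*(a*x - 1) / (1 - x^2) - 2*μ*a

section
variable {μ a x : ℝ}

theorem bounds_of_mem_Ico_two_div (ha : 2 < a) (hx : x ∈ Ico (2/a) 1) :
    2 ≤ a*x ∧ 0 < 1 - x^2 ∧ 1 - x^2 ≤ (a*x - 1)^2 - x^2 := by
  have hax : 2 ≤ a*x := by
    rw [mul_comm]; exact (div_le_iff₀ (by linarith)).1 hx.1
  have hx0 : 0 < x := by nlinarith
  exact ⟨hax, by nlinarith [hx.2], by nlinarith⟩

theorem hasDerivAt_wLog (ha : 2 < a) (hx : x ∈ Ico (2/a) 1) :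
    HasDerivAt (wLog μ a) (wLogDerivNum μ a x / (a*x - 1)) x := by
  obtain ⟨hax, hV, hUV⟩ := bounds_of_mem_Ico_two_div ha hx
  have dt : HasDerivAt (fun y => a*y - 1) a x := by
    simpa using ((hasDerivAt_id x).const_mul a).sub_const 1
  have dU : HasDerivAt (fun y => (a*y - 1)^2 - y^2) (2*(a*x - 1)*a - 2*x) x :=
    ((dt.pow 2).sub (hasDerivAt_pow 2 x)).congr_deriv (by push_cast; ring)
  have dV : HasDerivAt (fun y => 1 - y^2) (-(2*x)) x :=
    ((hasDerivAt_const x (1:ℝ)).sub (hasDerivAt_pow 2 x)).congr_deriv (by push_cast; ring)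
  refine (((dU.log (by nlinarith)).sub (dV.log hV.ne')).sub
    ((dt.log (by linarith)).const_mul (2*μ + 2))).congr_deriv ?_
  have : a*x - 1 ≠ 0 := by linarith
  have : (a*x - 1)^2 - x^2 ≠ 0 := by nlinarith
  rw [wLogDerivNum]
  field_simp
  ring

-- Factored so that each factor is visibly positive on `(2/a, 1)`;
-- the first difference equals `(ax-1)² - 1`.
theorem hasDerivAt_wLogDerivNum (ha : 2 < a) (hx : x ∈ Ico (2/a) 1) :
    HasDerivAt (wLogDerivNum μ a)
      (2 * (((a*x - 1)^2 - x^2) - (1 - x^2)) *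
          ((2*a*x - 2) * (((a*x - 1)^2 - x^2) + (1 - x^2)) + (1 - x^2) * ((a*x - 1)^2 - x^2))
        / (((a*x - 1)^2 - x^2)^2 * (1 - x^2)^2)) x := by
  obtain ⟨hax, hV, hUV⟩ := bounds_of_mem_Ico_two_div ha hx
  have dt : HasDerivAt (fun y => a*y - 1) a x := by
    simpa using ((hasDerivAt_id x).const_mul a).sub_const 1
  have dU : HasDerivAt (fun y => (a*y - 1)^2 - y^2) (2*(a*x - 1)*a - 2*x) x :=
    ((dt.pow 2).sub (hasDerivAt_pow 2 x)).congr_deriv (by push_cast; ring)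
  have dV : HasDerivAt (fun y => 1 - y^2) (-(2*x)) x :=
    ((hasDerivAt_const x (1:ℝ)).sub (hasDerivAt_pow 2 x)).congr_deriv (by push_cast; ring)
  have d2x : HasDerivAt (fun y : ℝ => 2*y) 2 x := by
    simpa using (hasDerivAt_id x).const_mul 2
  have d2xt : HasDerivAt (fun y : ℝ => 2*y*(a*y - 1)) (2*(a*x - 1) + 2*x*a) x := d2x.mul dt
  have : (a*x - 1)^2 - x^2 ≠ 0 := by nlinarith
  refine (((d2x.div dU this).add (d2xt.div dV hV.ne')).sub_const (2*μ*a)).congr_deriv ?_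
  field_simp
  ring

theorem strictMonoOn_wLogDerivNum (ha : 2 < a) :
    StrictMonoOn (wLogDerivNum μ a) (Ico (2/a) 1) := by
  refine strictMonoOn_of_hasDerivWithinAt_pos (convex_Ico _ _)
    (fun x hx => (hasDerivAt_wLogDerivNum ha hx).continuousAt.continuousWithinAt)
    (fun x hx => (hasDerivAt_wLogDerivNum ha
      (Ioo_subset_Ico_self (by simpa using hx))).hasDerivWithinAt) ?_
  intro x hx
  rw [interior_Ico] at hx
  obtain ⟨hax, hV, hUV⟩ := bounds_of_mem_Ico_two_div ha (Ioo_subset_Ico_self hx)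
  have hax' : 2 < a*x := by
    rw [mul_comm]; exact (div_lt_iff₀ (by linarith)).1 hx.1
  have hUV' : 1 - x^2 < (a*x - 1)^2 - x^2 := by nlinarith
  have hU := hV.trans hUV'
  have : 0 < 2*a*x - 2 := by linarith
  have := sub_pos.2 hUV'
  exact div_pos (mul_pos (by positivity) (by positivity)) (by positivity)

theorem wLog_two_div (ha : a ≠ 0) : wLog μ a (2/a) = 0 := by
  have : a * (2/a) - 1 = 1 := by field_simp; ring
  rw [wLog, this]
  simp

theorem wLogDerivNum_two_div_neg (ha : 2 < a) (hμa : 4*(μ + 1) < μ*a^2) :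
    wLogDerivNum μ a (2/a) < 0 := by
  have h4 : 0 < a^2 - 4 := by nlinarith
  have ht : a * (2/a) - 1 = 1 := by field_simp; ring
  have : wLogDerivNum μ a (2/a) = 2*a*(4 - μ*(a^2 - 4)) / (a^2 - 4) := by
    have : a ≠ 0 := by positivity
    have : a^2 - 4 ≠ 0 := h4.ne'
    rw [wLogDerivNum, ht, one_pow, show 1 - (2/a)^2 = (a^2 - 4)/a^2 by field_simp; ring]
    field_simp
    ring
  rw [this]
  exact div_neg_of_neg_of_pos (mul_neg_of_pos_of_neg (by linarith) (by linarith)) h4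

theorem wFun_eq_mul_exp_wLog (ha : 2 < a) (hx : x ∈ Ico (2/a) 1) :
    wFun μ a x = (1 - x^2) * (exp (wLog μ a x) - 1) := by
  obtain ⟨hax, hV, hUV⟩ := bounds_of_mem_Ico_two_div ha hx
  have ht : 0 < a*x - 1 := by linarith
  rw [wFun, wLog, exp_sub, exp_sub, exp_log (by linarith), exp_log hV, mul_comm (2*μ + 2),
    ← rpow_def_of_pos ht]
  have := (rpow_pos_of_pos ht (2*μ + 2)).ne'
  field_simp
  ring

theorem wFun_one_pos (ha : 2 < a) : 0 < wFun μ a 1 := by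
  have : wFun μ a 1 = a*(a - 2) / (a - 1)^(2*μ + 2) := by
    simp only [wFun, mul_one, one_pow]
    ring
  rw [this]
  exact div_pos (by nlinarith) (rpow_pos_of_pos (by linarith) _)

theorem continuousOn_wFun (ha : 0 < a) : ContinuousOn (wFun μ a) (Ioi (1/a)) := by
  intro x hx
  have : 1 < a * x := by rw [mem_Ioi, div_lt_iff₀ ha] at hx; linarith
  have ht : 0 < a*x - 1 := by linarith
  exact ContinuousAt.continuousWithinAt (by
    unfold wFun
    fun_prop (disch := first | exact Or.inl ht.ne' | exact (rpow_pos_of_pos ht _).ne'))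

theorem exists_wFun_neg (ha : 2 < a) (hμa : 4*(μ + 1) < μ*a^2) :
    ∃ x ∈ Ioo (2/a) 1, wFun μ a x < 0 := by
  have h21 : 2/a < 1 := (div_lt_one (by linarith)).2 ha
  have hd := hasDerivAt_wLog (μ := μ) ha ⟨le_rfl, h21⟩
  rw [show a * (2/a) - 1 = 1 by field_simp; ring, div_one] at hd
  obtain ⟨x, hx, hneg⟩ :=
    exists_mem_Ioo_lt_of_hasDerivAt_neg hd (wLogDerivNum_two_div_neg ha hμa) h21
  rw [wLog_two_div (by positivity)] at hneg
  refine ⟨x, hx, ?_⟩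
  rw [wFun_eq_mul_exp_wLog ha (Ioo_subset_Ico_self hx)]
  exact mul_neg_of_pos_of_neg (bounds_of_mem_Ico_two_div ha (Ioo_subset_Ico_self hx)).2.1
    (sub_neg.2 (exp_lt_one_iff.2 hneg))

theorem exists_wFun_eq_zero (ha : 2 < a) (hμa : 4*(μ + 1) < μ*a^2) :
    ∃ x ∈ Ioc (2/a) 1, wFun μ a x = 0 := by
  obtain ⟨x₀, hx₀, hneg⟩ := exists_wFun_neg ha hμa
  have hsub : Icc x₀ 1 ⊆ Ioi (1/a) := fun x hx =>
    (div_lt_div_of_pos_right one_lt_two (by linarith)).trans (hx₀.1.trans_le hx.1)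
  obtain ⟨x, hx, hx0⟩ := intermediate_value_Icc hx₀.2.le
    ((continuousOn_wFun (by linarith)).mono hsub) ⟨hneg.le, (wFun_one_pos ha).le⟩
  exact ⟨x, ⟨hx₀.1.trans_le hx.1, hx.2⟩, hx0⟩

theorem subsingleton_wLog_zeros (ha : 2 < a) :
    {x ∈ Ioo (2/a) 1 | wLog μ a x = 0}.Subsingleton := by
  refine subsingleton_zeros_of_hasDerivAt (wLog_two_div (by positivity))
    (fun x hx => (hasDerivAt_wLog ha hx).continuousAt.continuousWithinAt)
    (fun x hx => hasDerivAt_wLog ha (Ioo_subset_Ico_self hx)) ?_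
  have hnum : ∀ x ∈ Ioo (2/a) 1, wLogDerivNum μ a x / (a*x - 1) = 0 → wLogDerivNum μ a x = 0 :=
    fun x hx h => (div_eq_zero_iff.1 h).resolve_right
      (by linarith [(bounds_of_mem_Ico_two_div ha (Ioo_subset_Ico_self hx)).1])
  rintro x ⟨hx, hx0⟩ y ⟨hy, hy0⟩
  exact (strictMonoOn_wLogDerivNum ha).injOn (Ioo_subset_Ico_self hx) (Ioo_subset_Ico_self hy)
    ((hnum x hx hx0).trans (hnum y hy hy0).symm)

theorem subsingleton_wFun_zeros (ha : 2 < a) :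
    {x ∈ Ioc (2/a) 1 | wFun μ a x = 0}.Subsingleton := by
  refine (subsingleton_wLog_zeros (μ := μ) ha).anti ?_
  rintro x ⟨hx, hx0⟩
  have hx1 : x < 1 := hx.2.lt_of_ne (by rintro rfl; exact (wFun_one_pos ha).ne' hx0)
  rw [wFun_eq_mul_exp_wLog ha ⟨hx.1.le, hx1⟩] at hx0
  have hV := (bounds_of_mem_Ico_two_div ha ⟨hx.1.le, hx1⟩).2.1
  exact ⟨⟨hx.1, hx1⟩, by simpa [hV.ne', sub_eq_zero] using hx0⟩

end

theorem two_lt_and_of_two_mul_sqrt_lt {μ a : ℝ} (hμ : 0 < μ) (ha : 2 * √((μ + 1)/μ) < a) :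
    2 < a ∧ 4*(μ + 1) < μ*a^2 := by
  have hq : 1 < √((μ + 1)/μ) :=
    (lt_sqrt zero_le_one).2 (by rw [one_pow, one_lt_div hμ]; linarith)
  have ha2 : 2 < a := by linarith
  have := (sqrt_lt' (by linarith : 0 < a/2)).1 (by linarith : √((μ + 1)/μ) < a/2)
  rw [div_lt_iff₀ hμ] at this
  exact ⟨ha2, by nlinarith⟩

theorem stmt2 (μ a : ℝ) (hμ : 0 < μ) (ha : 2 * Real.sqrt ((μ+1)/μ) < a) :
    ∃! x : ℝ, x ∈ Set.Ioc (2/a) 1 ∧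
      ((a^2 - 1) * x^2 - 2*a*x + 1) / (a*x - 1) ^ (2*μ+2) + x^2 - 1 = 0 := by
  obtain ⟨ha2, hμa⟩ := two_lt_and_of_two_mul_sqrt_lt hμ ha
  obtain ⟨x, hx, hx0⟩ := exists_wFun_eq_zero ha2 hμa
  exact ⟨x, ⟨hx, hx0⟩, fun y hy => subsingleton_wFun_zeros ha2 hy ⟨hx, hx0⟩⟩
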